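/- arXiv:2109.01556 — 10 statements merged into one kernel-verified Lean document; each statement's English description precedes it below -/
import Mathlib

section
/- Let 0 < L < U and θ = U/L. For any reservation price Φ ∈ [L, U], the quantity max(Φ/L, U/Φ) is at least √θ, with equality if and only if Φ = √(LU). -/
theorem stmt_2 (L U θ : ℝ) (hL : 0 < L) (hLU : L < U) (hθ : θ = U / L) :
    ∀ Φ ∈ Set.Icc L U,
      Real.sqrt θ ≤ max (Φ / L) (U / Φ) ∧
      (max (Φ / L) (U / Φ) = Real.sqrt θ ↔ Φ = Real.sqrt (L * U)) := by
  intro Φ hΦ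
  obtain ⟨h1, h2⟩ := hΦ
  have hΦpos : 0 < Φ := lt_of_lt_of_le hL h1
  have hU : 0 < U := hL.trans hLU
  have hθpos : 0 < θ := by rw [hθ]; positivity
  have hprod : (Φ / L) * (U / Φ) = θ := by
    rw [hθ]; field_simp
  set m := max (Φ / L) (U / Φ) with hm_def
  have hm : 0 < m := lt_max_of_lt_left (by positivity)
  have hθm : θ ≤ m ^ 2 := by
    calc θ = (Φ / L) * (U / Φ) := hprod.symm
      _ ≤ m * m := mul_le_mul (le_max_left _ _) (le_max_right _ _) (by positivity) hm.le
      _ = m ^ 2 := (sq m).symm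
  have hle : Real.sqrt θ ≤ m := by
    have := Real.sqrt_le_sqrt hθm
    rwa [Real.sqrt_sq hm.le] at this
  have hsθ : Real.sqrt θ ^ 2 = θ := Real.sq_sqrt hθpos.le
  have hsθpos : 0 < Real.sqrt θ := Real.sqrt_pos.mpr hθpos
  refine ⟨hle, ?_, ?_⟩
  · intro heq
    have ha : Φ / L ≤ Real.sqrt θ := heq ▸ le_max_left _ _
    have hb : U / Φ ≤ Real.sqrt θ := heq ▸ le_max_right _ _
    have ha' : Φ ≤ L * Real.sqrt θ := by
      rw [div_le_iff₀ hL] at ha; linarith [ha]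
    have hb' : U ≤ Φ * Real.sqrt θ := by
      rw [div_le_iff₀ hΦpos] at hb; linarith [hb]
    have hLθ : L * Real.sqrt θ ^ 2 = U := by
      rw [hsθ, hθ]; field_simp
    have hΦ2 : Φ ^ 2 = L * U := by nlinarith [hsθpos, hΦpos, hL]
    rw [← hΦ2, Real.sqrt_sq hΦpos.le]
  · intro hΦeq
    have hsL : Real.sqrt L ^ 2 = L := Real.sq_sqrt hL.le
    have hsU : Real.sqrt U ^ 2 = U := Real.sq_sqrt hU.le
    have hsLpos : 0 < Real.sqrt L := Real.sqrt_pos.mpr hL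
    have hsUpos : 0 < Real.sqrt U := Real.sqrt_pos.mpr hU
    have hΦ' : Φ = Real.sqrt L * Real.sqrt U := by
      rw [hΦeq, Real.sqrt_mul hL.le]
    have hs : Real.sqrt θ = Real.sqrt U / Real.sqrt L := by
      rw [hθ, Real.sqrt_div hU.le]
    have e1 : Φ / L = Real.sqrt θ := by
      rw [hΦ', hs]
      rw [div_eq_div_iff hL.ne' hsLpos.ne']
      nlinarith
    have e2 : U / Φ = Real.sqrt θ := by
      rw [hΦ', hs]
      rw [div_eq_div_iff (by positivity) hsLpos.ne']
      nlinarith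
    rw [hm_def, e1, e2, max_self]
end

section
/- Let 0 < L < U, θ = U/L, λ ∈ [0,1], γ = γ(λ) ∈ [√θ, θ] and η = θ/γ = λγ + 1 - λ. Then for every P ∈ [Lη, Lγ), the reservation price Φ_P = λLγ + (1-λ)P/η satisfies: (i) P ≥ Φ_P; (ii) Φ_P/L ≤ γ; (iii) P/Φ_P ≤ η; (iv) U/Φ_P ≤ γ. -/
theorem stmt_4 (L U θ lam γ η : ℝ) (hL : 0 < L) (hLU : L < U) (hθ : θ = U / L)
    (hlam : lam ∈ Set.Icc (0:ℝ) 1) (hγ : γ ∈ Set.Icc (Real.sqrt θ) θ)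
    (hη1 : η = θ / γ) (hη2 : η = lam * γ + 1 - lam) :
    ∀ P ∈ Set.Ico (L * η) (L * γ), ∀ Φ : ℝ,
      Φ = lam * L * γ + (1 - lam) * P / η →
      Φ ≤ P ∧ Φ / L ≤ γ ∧ P / Φ ≤ η ∧ U / Φ ≤ γ := by
  obtain ⟨hl0, hl1⟩ := hlam
  obtain ⟨hγ1', hγ2⟩ := hγ
  have hθ1 : 1 < θ := by
    rw [hθ]; exact (one_lt_div hL).2 hLU
  have hγ1 : 1 < γ := lt_of_lt_of_le (by
    have h := Real.sqrt_lt_sqrt (by norm_num) hθ1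
    rwa [Real.sqrt_one] at h) hγ1'
  have hγpos : 0 < γ := by linarith
  have hη_ge1 : 1 ≤ η := by rw [hη2]; nlinarith
  have hηpos : 0 < η := by linarith
  have hθγη : θ = γ * η := by rw [hη1]; field_simp
  have hU : U = L * θ := by rw [hθ]; field_simp
  intro P hP Φ hΦ
  obtain ⟨hP1, hP2⟩ := hP
  have hΦη : Φ * η = lam * L * γ * η + (1 - lam) * P := by
    rw [hΦ]; field_simp
  have hηγ : η ≤ γ := by nlinarith
  have hLη2 : L * η * η = lam * L * γ * η + (1 - lam) * (L * η) := by rw [hη2]; ring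
  have hΦ_geLη : L * η ≤ Φ := by
    have h1 : (L * η) * η ≤ Φ * η := by
      nlinarith [mul_nonneg (sub_nonneg.2 hl1) (sub_nonneg.2 hP1)]
    exact le_of_mul_le_mul_right h1 hηpos
  have hΦpos : 0 < Φ := by nlinarith
  refine ⟨?_, ?_, ?_, ?_⟩
  · nlinarith [mul_nonneg (mul_nonneg hl0 hγpos.le) (sub_nonneg.2 hP1)]
  · rw [div_le_iff₀ hL]; nlinarith
  · rw [div_le_iff₀ hΦpos]
    nlinarith [mul_nonneg hl0 (sub_nonneg.2 hP2.le),
      mul_nonneg (mul_nonneg hl0 (mul_nonneg hL.le hγpos.le)) (sub_nonneg.2 hη_ge1)]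
  · rw [div_le_iff₀ hΦpos]
    nlinarith [mul_le_mul_of_nonneg_left hΦ_geLη hγpos.le]
end

section
/- Let 0 < L < U, θ = U/L > 1, and α > 1 with (α - 1)e^α = θ - 1. Define φ(w) = L + (αL - L)e^{αw} for w ∈ [0,1]. Then for all w ∈ [0,1], φ(w) = α(∫₀^w φ(u) du + (1 - w)L), and φ(0) = αL, φ(1) = U. -/
open Real intervalIntegral

theorem integral_exp_const_mul {c : ℝ} (hc : c ≠ 0) (a b : ℝ) :
    ∫ x in a..b, exp (c * x) = (exp (c * b) - exp (c * a)) / c := by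
  rw [integral_comp_mul_left exp hc, integral_exp, smul_eq_mul, inv_mul_eq_div]

theorem integral_const_add_mul_exp (c d : ℝ) {k : ℝ} (hk : k ≠ 0) (w : ℝ) :
    ∫ u in (0:ℝ)..w, (c + d * exp (k * u)) = c * w + d * ((exp (k * w) - 1) / k) := by
  have hexp : Continuous fun u => d * exp (k * u) := by fun_prop
  rw [integral_add intervalIntegrable_const (hexp.intervalIntegrable _ _), integral_const_mul,
    integral_exp_const_mul hk, integral_const, mul_zero, exp_zero, smul_eq_mul, sub_zero, mul_comm]

theorem exp_threshold_eq_mul_integral_add (L : ℝ) {α : ℝ} (hα : α ≠ 0) (w : ℝ) :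
    L + (α * L - L) * exp (α * w)
      = α * ((∫ u in (0:ℝ)..w, (L + (α * L - L) * exp (α * u))) + (1 - w) * L) := by
  rw [integral_const_add_mul_exp _ _ hα]
  field_simp
  ring

theorem stmt_5_general (L U θ α : ℝ) (hL : 0 < L) (hθ : θ = U / L)
    (hα : 1 < α) (hαθ : (α - 1) * Real.exp α = θ - 1)
    (φ : ℝ → ℝ) (hφ : ∀ w, φ w = L + (α * L - L) * Real.exp (α * w)) :
    (∀ w ∈ Set.Icc (0:ℝ) 1,
      φ w = α * ((∫ u in (0:ℝ)..w, φ u) + (1 - w) * L)) ∧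
    φ 0 = α * L ∧ φ 1 = U := by
  obtain rfl : φ = fun w => L + (α * L - L) * exp (α * w) := funext hφ
  have hα0 : α ≠ 0 := (zero_lt_one.trans hα).ne'
  refine ⟨fun w _ => exp_threshold_eq_mul_integral_add L hα0 w, by simp, ?_⟩
  have hU : U = θ * L := by rw [hθ, div_mul_cancel₀ U hL.ne']
  calc L + (α * L - L) * exp (α * 1)
      = L * (1 + (α - 1) * exp α) := by ring_nf
    _ = U := by rw [hαθ, hU]; ring

theorem stmt_5 (L U θ α : ℝ) (hL : 0 < L) (hLU : L < U) (hθ : θ = U / L)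
    (hα : 1 < α) (hαθ : (α - 1) * Real.exp α = θ - 1)
    (φ : ℝ → ℝ) (hφ : ∀ w, φ w = L + (α * L - L) * Real.exp (α * w)) :
    (∀ w ∈ Set.Icc (0:ℝ) 1,
      φ w = α * ((∫ u in (0:ℝ)..w, φ u) + (1 - w) * L)) ∧
    φ 0 = α * L ∧ φ 1 = U :=
  stmt_5_general L U θ α hL hθ hα hαθ φ hφ
end

section
/- Let 0 < L < U, θ = U/L, γ ∈ (1, θ], and η ≥ 1. If (L/γ)·[(θ-1)·ln((θ-1)/(γ-1)) - (θ-γ)] ≤ (η - 1)U/η (with the left side interpreted as 0 when γ = θ), then η ≥ θ / [θ/γ + (θ - 1)(1 - (1/γ)·ln((θ - 1)/(γ - 1)))]. -/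
/-!
Writing `U = θ L` and dividing the constraint by `L > 0` turns it into
`θ / η ≤ θ / γ + (θ - 1) (1 - ln((θ - 1)/(γ - 1)) / γ)`; the right side is then positive,
and the bound on `η` is the same inequality with `η` and the right side exchanged.
-/

lemma div_le_of_consistency_constraint {L θ γ η X : ℝ} (hL : 0 < L) (hγ : 0 < γ) (hη : 0 < η)
    (h : (L / γ) * ((θ - 1) * X - (θ - γ)) ≤ (η - 1) * (θ * L) / η) :
    θ / η ≤ θ / γ + (θ - 1) * (1 - (1 / γ) * X) := by
  have hdiv : ((θ - 1) * X - (θ - γ)) / γ ≤ θ - θ / η := by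
    refine le_of_mul_le_mul_left ?_ hL
    calc L * (((θ - 1) * X - (θ - γ)) / γ)
        = (L / γ) * ((θ - 1) * X - (θ - γ)) := by ring
      _ ≤ (η - 1) * (θ * L) / η := h
      _ = L * (θ - θ / η) := by field_simp
  have hD : θ / γ + (θ - 1) * (1 - (1 / γ) * X) = θ - ((θ - 1) * X - (θ - γ)) / γ := by
    field_simp
    ring
  linarith

theorem stmt_9 (L U θ γ η : ℝ) (hL : 0 < L) (hLU : L < U) (hθ : θ = U / L)
    (hγ : γ ∈ Set.Ioc 1 θ) (hη : 1 ≤ η)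
    (h : (L / γ) * ((θ - 1) * Real.log ((θ - 1) / (γ - 1)) - (θ - γ))
          ≤ (η - 1) * U / η) :
    η ≥ θ / (θ / γ + (θ - 1) * (1 - (1 / γ) * Real.log ((θ - 1) / (γ - 1)))) := by
  have hθ_pos : 0 < θ := by rw [hθ]; exact div_pos (hL.trans hLU) hL
  have hU : U = θ * L := by rw [hθ, div_mul_cancel₀ _ hL.ne']
  have hη_pos : 0 < η := by linarith
  rw [hU] at h
  have key := div_le_of_consistency_constraint hL (by linarith [hγ.1]) hη_pos h
  exact (div_le_comm₀ ((div_pos hθ_pos hη_pos).trans_le key) hη_pos).mpr key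
end

section
/- Let 0 < L < U, θ = U/L, γ ∈ (1, θ], and define f(γ) = θ / [θ/γ + (θ - 1)(1 - (1/γ)·ln((θ - 1)/(γ - 1)))]. Then f(θ) = 1, and if α ∈ (1, θ) satisfies (α - 1)e^α = θ - 1 (the optimal one-way trading competitive ratio), then f(α) = α. -/
open Real

noncomputable def oneWayConsistency (θ γ : ℝ) : ℝ :=
  θ / (θ / γ + (θ - 1) * (1 - (1 / γ) * log ((θ - 1) / (γ - 1))))

theorem oneWayConsistency_self {θ : ℝ} (hθ : θ ≠ 0) : oneWayConsistency θ θ = 1 := by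
  -- `(θ - 1) / (θ - 1)` is `1` or, junk, `0`; its logarithm vanishes either way.
  have hlog : log ((θ - 1) / (θ - 1)) = 0 := by
    rcases eq_or_ne (θ - 1) 0 with h | h <;> simp [h]
  rw [oneWayConsistency, hlog, div_self hθ]
  convert div_self hθ using 2
  ring

theorem oneWayConsistency_eq_self_of_mul_exp_eq {θ α : ℝ} (hθ : θ ≠ 0) (hα : α ≠ 0)
    (hα1 : α ≠ 1) (heq : (α - 1) * exp α = θ - 1) : oneWayConsistency θ α = α := by
  have hlog : log ((θ - 1) / (α - 1)) = α := by
    rw [← heq, mul_div_cancel_left₀ _ (sub_ne_zero.mpr hα1), log_exp]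
  rw [oneWayConsistency, hlog, one_div_mul_cancel hα, sub_self, mul_zero, add_zero,
    div_div_cancel₀ hθ]

theorem stmt_10 (L U θ : ℝ) (hL : 0 < L) (hLU : L < U) (hθ : θ = U / L)
    (f : ℝ → ℝ)
    (hf : ∀ γ ∈ Set.Ioc (1:ℝ) θ,
      f γ = θ / (θ / γ + (θ - 1) * (1 - (1 / γ) * Real.log ((θ - 1) / (γ - 1))))) :
    f θ = 1 ∧
    ∀ α ∈ Set.Ioo (1:ℝ) θ, (α - 1) * Real.exp α = θ - 1 → f α = α := by
  have hθ1 : 1 < θ := hθ ▸ (one_lt_div hL).2 hLU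
  refine ⟨(hf θ ⟨hθ1, le_rfl⟩).trans (oneWayConsistency_self (by positivity)), ?_⟩
  rintro α ⟨hα1, hαθ⟩ heq
  exact (hf α ⟨hα1, hαθ.le⟩).trans
    (oneWayConsistency_eq_self_of_mul_exp_eq (by positivity) (by positivity) hα1.ne' heq)
end

section
/- Let 0 < L < U, γ > 1 with γL ≤ U, and let g: [L, U] → [0, 1] be a nondecreasing function with g(p) = 0 for all p ∈ [L, γL). Suppose that for all p ∈ [γL, U], g(γL)·γL + ∫_{γL}^{p} u dg(u) + L(1 - g(p)) ≥ p/γ, where the integral is a Riemann–Stieltjes integral. Then g(p) ≥ (1/γ)·ln((p - L)/(γL - L)) for all p ∈ [γL, U]. -/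
/-!
Integrating by parts, `∫_(a, x] u dg = x g(x) - a g(a) - Φ(x)` with `a = γL` and
`Φ(x) = ∫_a^x g`, so robustness says `(x - a)/γ + Φ(x) ≤ (x - L) g(x)`, where `g` is the right
derivative of `Φ`. Dividing by `x - L` makes this a lower bound on the right derivative of
`Φ(x)/(x - L)`, and comparing with the solution of the equality case gives
`γ Φ(x) ≥ (x - L) log((x - L)/(a - L)) - (x - a)`. Substituting back into the robustness inequality
leaves `γ (x - L) g(x) ≥ (x - L) log((x - L)/(a - L))`.
-/

open MeasureTheory Set

namespace StieltjesFunction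

variable (g : StieltjesFunction ℝ) {a x : ℝ}

theorem measureReal_restrict_Ioc_setOf_lt_sub {t : ℝ} (ht : 0 ≤ t) :
    (g.measure.restrict (Ioc a x)).real {u | t < u - a} = g.measure.real (Ioc (a + t) x) := by
  have hset : {u : ℝ | t < u - a} = Ioi (a + t) := by
    ext u; simp only [mem_ofPred_eq, mem_Ioi]; constructor <;> intro <;> linarith
  rw [hset, measureReal_restrict_apply _root_.measurableSet_Ioi, inter_comm, Ioc_inter_Ioi,
    max_eq_right (by linarith)]

theorem measureReal_Ioc (hax : a ≤ x) : g.measure.real (Ioc a x) = g x - g a := by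
  rw [measureReal_def, g.measure_Ioc, ENNReal.toReal_ofReal (sub_nonneg.2 (g.mono hax))]

theorem setIntegral_Ioc_sub_left (hax : a ≤ x) :
    ∫ u in Ioc a x, (u - a) ∂g.measure = ∫ t in a..x, (g x - g t) := by
  have hmem : ∀ᵐ u ∂g.measure.restrict (Ioc a x), u ∈ Ioc a x :=
    ae_restrict_mem _root_.measurableSet_Ioc
  have hint : IntegrableOn (fun u => u - a) (Ioc a x) g.measure :=
    (continuous_sub_right a).integrableOn_Ioc
  have hnn : 0 ≤ᵐ[g.measure.restrict (Ioc a x)] fun u => u - a :=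
    hmem.mono fun u hu => sub_nonneg.2 hu.1.le
  -- layer cake: for `0 < t ≤ x - a` the tail `{u | t < u - a}` has measure `g x - g (a + t)`
  rw [hint.integral_eq_integral_meas_lt hnn,
    setIntegral_eq_of_subset_of_forall_sdiff_eq_zero _root_.measurableSet_Ioi
      (Ioc_subset_Ioi_self : Ioc 0 (x - a) ⊆ Ioi 0),
    setIntegral_congr_fun _root_.measurableSet_Ioc (g := fun t => g x - g (a + t)),
    ← intervalIntegral.integral_of_le (sub_nonneg.2 hax),
    intervalIntegral.integral_comp_add_left (fun t => g x - g t)]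
  · simp
  · rintro t ⟨ht0, htx⟩
    dsimp only
    rw [measureReal_restrict_Ioc_setOf_lt_sub g ht0.le, measureReal_Ioc g (by linarith)]
  · rintro t ⟨ht0, htx⟩
    have hxt : x - a < t := by simpa [mem_Ioi.1 ht0] using htx
    rw [measureReal_restrict_Ioc_setOf_lt_sub g (le_of_lt ht0), Ioc_eq_empty (by linarith),
      measureReal_empty]

theorem setIntegral_Ioc_id (hax : a ≤ x) :
    ∫ u in Ioc a x, u ∂g.measure = x * g x - a * g a - ∫ t in a..x, g t := by
  have hsplit : ∫ u in Ioc a x, u ∂g.measure = ∫ u in Ioc a x, ((u - a) + a) ∂g.measure := by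
    simp
  rw [hsplit, integral_add _ continuous_const.integrableOn_Ioc, setIntegral_Ioc_sub_left g hax,
    setIntegral_const, measureReal_Ioc g hax,
    intervalIntegral.integral_sub intervalIntegrable_const g.mono.intervalIntegrable,
    intervalIntegral.integral_const, smul_eq_mul, smul_eq_mul]
  · ring
  · exact (continuous_sub_right a).integrableOn_Ioc

theorem hasDerivWithinAt_primitive_Ici (a x : ℝ) :
    HasDerivWithinAt (fun y => ∫ t in a..y, g t) (g x) (Ici x) x :=
  intervalIntegral.integral_hasDerivWithinAt_right g.mono.intervalIntegrable
    g.mono.measurable.stronglyMeasurable.stronglyMeasurableAtFilter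
    ((g.right_continuous x).mono Ioi_subset_Ici_self)

theorem continuous_primitive (a : ℝ) : Continuous fun y => ∫ t in a..y, g t :=
  intervalIntegral.continuous_primitive (fun _ _ => g.mono.intervalIntegrable) a

end StieltjesFunction

open Real in
theorem mul_sub_le_of_add_le_mul_deriv_right {φ φ' : ℝ → ℝ} {L a b c x : ℝ} (hLa : L < a)
    (hφ : ContinuousOn φ (Icc a b)) (hφ' : ∀ y ∈ Ico a b, HasDerivWithinAt φ (φ' y) (Ici y) y)
    (ha : 0 ≤ φ a) (hineq : ∀ y ∈ Ico a b, c * (y - a) + φ y ≤ (y - L) * φ' y)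
    (hx : x ∈ Icc a b) :
    c * ((x - L) * log ((x - L) / (a - L)) - (x - a)) ≤ φ x := by
  have hpos : ∀ y ∈ Icc a b, 0 < y - L := fun y hy => by linarith [hy.1]
  -- `hineq` says `(φ / (y - L))' ≥ c (y - a) / (y - L) ^ 2 = ψ'`, and `ψ a = 0`
  set ψ : ℝ → ℝ := fun y => c * (log (y - L) - log (a - L) + (a - L) * (y - L)⁻¹ - 1)
  have hψ : ∀ y ∈ Icc a b, HasDerivAt ψ (c * (y - a) / (y - L) ^ 2) y := by
    intro y hy
    have hyL := (hpos y hy).ne'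
    have h1 : HasDerivAt (fun y => y - L) 1 y := (hasDerivAt_id' y).sub_const L
    refine ((((h1.log hyL).sub_const _).add ((h1.inv hyL).const_mul (a - L))).sub_const 1
      |>.const_mul c).congr_deriv ?_
    field_simp
    ring
  have hcmp : ψ x ≤ φ x / (x - L) := by
    refine image_le_of_deriv_right_le_deriv_boundary
      (fun y hy => (hψ y hy).continuousAt.continuousWithinAt)
      (fun y hy => (hψ y (Ico_subset_Icc_self hy)).hasDerivWithinAt)
      (B' := fun y => (φ' y * (y - L) - φ y * 1) / (y - L) ^ 2) ?_
      (hφ.div (by fun_prop) fun y hy => (hpos y hy).ne')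
      (fun y hy => (hφ' y hy).div ((hasDerivWithinAt_id y _).sub_const L)
        (hpos y (Ico_subset_Icc_self hy)).ne')
      (fun y hy => ?_) hx
    · have haL : a - L ≠ 0 := (sub_pos.2 hLa).ne'
      simpa [ψ, haL] using div_nonneg ha (sub_pos.2 hLa).le
    · gcongr
      linarith [hineq y hy]
  have hxL := hpos x hx
  rw [le_div_iff₀ hxL] at hcmp
  rw [log_div hxL.ne' (sub_pos.2 hLa).ne']
  have hψx : ψ x * (x - L) = c * ((x - L) * (log (x - L) - log (a - L)) - (x - a)) := by
    simp only [ψ]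
    field_simp
    ring
  linarith

theorem stmt_11_general (L U γ : ℝ) (hL : 0 < L) (hγ : 1 < γ)
    (g : StieltjesFunction ℝ)
    (hrob : ∀ p ∈ Set.Icc (γ * L) U,
      g (γ * L) * (γ * L) + (∫ u in Set.Ioc (γ * L) p, u ∂g.measure)
        + L * (1 - g p) ≥ p / γ) :
    ∀ p ∈ Set.Icc (γ * L) U,
      g p ≥ (1 / γ) * Real.log ((p - L) / (γ * L - L)) := by
  intro p hp
  have hLa : L < γ * L := lt_mul_left hL hγ
  have hineq : ∀ x ∈ Icc (γ * L) U,
      1 / γ * (x - γ * L) + ∫ t in γ * L..x, g t ≤ (x - L) * g x := by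
    intro x hx
    have h := hrob x hx
    rw [g.setIntegral_Ioc_id hx.1] at h
    have hγx : 1 / γ * (x - γ * L) = x / γ - L := by field_simp
    linarith
  have hcmp := mul_sub_le_of_add_le_mul_deriv_right hLa (g.continuous_primitive _).continuousOn
    (fun y _ => g.hasDerivWithinAt_primitive_Ici _ y) intervalIntegral.integral_same.ge
    (fun y hy => hineq y (Ico_subset_Icc_self hy)) hp
  have hpL : 0 < p - L := by linarith [hp.1]
  rw [ge_iff_le, ← mul_le_mul_iff_of_pos_left hpL]
  linarith [hineq p hp]

theorem stmt_11 (L U γ : ℝ) (hL : 0 < L) (hLU : L < U) (hγ : 1 < γ)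
    (hγL : γ * L ≤ U) (g : StieltjesFunction ℝ)
    (hrange : ∀ p ∈ Set.Icc L U, g p ∈ Set.Icc (0:ℝ) 1)
    (hzero : ∀ p ∈ Set.Ico L (γ * L), g p = 0)
    (hrob : ∀ p ∈ Set.Icc (γ * L) U,
      g (γ * L) * (γ * L) + (∫ u in Set.Ioc (γ * L) p, u ∂g.measure)
        + L * (1 - g p) ≥ p / γ) :
    ∀ p ∈ Set.Icc (γ * L) U,
      g p ≥ (1 / γ) * Real.log ((p - L) / (γ * L - L)) :=
  stmt_11_general L U γ hL hγ g hrob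
end

section
/- Let 0 < L < U, η > 1, β ∈ (0,1), and M = L + (ηL - L)e^{ηβ}. Define φ(w) = L + (ηL - L)e^{ηw} on [0, β). Then for all w ∈ [0, β), φ(w) = η·(∫₀^w φ(u) du + (1 - w)L), and φ(β⁻) = M; consequently, for any p ∈ [ηL, M) and w* ∈ [0, β) with φ(w*) = p, one has p ≤ η·(∫₀^{w*} φ(u) du + (1 - w*)L). -/
theorem stmt_15 (L U η β M : ℝ) (hL : 0 < L) (hLU : L < U) (hη : 1 < η)
    (hβ : β ∈ Set.Ioo (0:ℝ) 1) (hM : M = L + (η * L - L) * Real.exp (η * β))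
    (φ : ℝ → ℝ) (hφ : ∀ w, φ w = L + (η * L - L) * Real.exp (η * w)) :
    (∀ w ∈ Set.Ico (0:ℝ) β,
      φ w = η * ((∫ u in (0:ℝ)..w, φ u) + (1 - w) * L)) ∧
    Filter.Tendsto φ (nhdsWithin β (Set.Iio β)) (nhds M) ∧
    (∀ p ∈ Set.Ico (η * L) M, ∀ w ∈ Set.Ico (0:ℝ) β, φ w = p →
      p ≤ η * ((∫ u in (0:ℝ)..w, φ u) + (1 - w) * L)) := by
  have hη0 : η ≠ 0 := by linarith
  have key : ∀ w : ℝ, φ w = η * ((∫ u in (0:ℝ)..w, φ u) + (1 - w) * L) := by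
    intro w
    have hint : ∫ u in (0:ℝ)..w, φ u
        = L * w + (η * L - L) * ((Real.exp (η * w) - 1) / η) := by
      have hfun : (fun u : ℝ => φ u) = fun u => L + (η * L - L) * Real.exp (η * u) :=
        funext hφ
      rw [hfun]
      have h1 : ∫ u in (0:ℝ)..w, Real.exp (η * u) = (Real.exp (η * w) - 1) / η := by
        rw [intervalIntegral.integral_comp_mul_left (fun x => Real.exp x) hη0]
        simp [integral_exp]
        ring
      rw [intervalIntegral.integral_add intervalIntegrable_const
        ((by continuity : Continuous fun u : ℝ => (η * L - L) * Real.exp (η * u)).intervalIntegrable 0 w),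
        intervalIntegral.integral_const_mul, h1]
      simp [mul_comm]
    rw [hint, hφ]
    field_simp
    ring
  refine ⟨fun w _ => key w, ?_, fun p _ w hw hpw => by rw [← hpw]; exact (key w).le⟩
  have hcont : Continuous φ := by
    have heq : φ = fun u => L + (η * L - L) * Real.exp (η * u) := funext hφ
    rw [heq]
    exact continuous_const.add (continuous_const.mul (Real.continuous_exp.comp (continuous_const.mul continuous_id)))
  have : φ β = M := by rw [hφ, hM]
  exact this ▸ (hcont.tendsto β).mono_left nhdsWithin_le_nhds
end

section
/- Let θ > 1 and for γ ∈ [√θ, θ] define the 1-max-search Pareto consistency η₁(γ) = θ/γ, and for γ ∈ (1, θ] define the one-way trading Pareto consistency η₂(γ) = θ/[θ/γ + (θ-1)(1 - (1/γ)ln((θ-1)/(γ-1)))]. Then for every γ ∈ [√θ, θ), η₂(γ) < η₁(γ), i.e., θ/γ + (θ-1)(1 - (1/γ)ln((θ-1)/(γ-1))) > γ. -/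
/-! Write `L = log ((θ - 1) / (γ - 1))`. The strict inequality `log x < x - 1` at
`x = (θ - 1) / (γ - 1) > 1` gives `(γ - 1) L < θ - γ`. After clearing the denominators `γ` and
`γ - 1`, what remains is the polynomial inequality `(θ - γ) (γ ^ 2 - θ) ≥ 0`, which is exactly
where `γ ≥ √θ` enters. -/

open Real

lemma Real.mul_log_div_lt_sub {a b : ℝ} (ha : 0 < a) (hb : 0 < b) (hab : a ≠ b) :
    a * log (b / a) < b - a := by
  have hlog : log (b / a) < b / a - 1 :=
    log_lt_sub_one_of_pos (div_pos hb ha) (by rwa [ne_eq, div_eq_one_iff_eq ha.ne', eq_comm])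
  calc a * log (b / a) < a * (b / a - 1) := mul_lt_mul_of_pos_left hlog ha
    _ = b - a := by field_simp

lemma lt_oneWayTrading_denominator {θ γ : ℝ} (hγ : 1 < γ) (hγθ : γ < θ) (hθγ : θ ≤ γ ^ 2) :
    γ < θ / γ + (θ - 1) * (1 - (1 / γ) * log ((θ - 1) / (γ - 1))) := by
  set L := log ((θ - 1) / (γ - 1))
  have hL : (γ - 1) * L < θ - γ := by
    simpa using mul_log_div_lt_sub (a := γ - 1) (b := θ - 1) (by linarith) (by linarith)
      (by linarith)
  have hrw : θ / γ + (θ - 1) * (1 - (1 / γ) * L) = (θ + (θ - 1) * (γ - L)) / γ := by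
    field_simp
  rw [hrw, lt_div_iff₀ (by linarith)]
  nlinarith [mul_lt_mul_of_pos_left hL (by linarith : (0 : ℝ) < θ - 1),
    mul_nonneg (by linarith : (0 : ℝ) ≤ θ - γ) (by linarith : (0 : ℝ) ≤ γ ^ 2 - θ)]

theorem stmt_16 (θ : ℝ) (hθ : 1 < θ) :
    ∀ γ ∈ Set.Ico (Real.sqrt θ) θ,
      θ / (θ / γ + (θ - 1) * (1 - (1 / γ) * Real.log ((θ - 1) / (γ - 1))))
        < θ / γ ∧
      θ / γ + (θ - 1) * (1 - (1 / γ) * Real.log ((θ - 1) / (γ - 1))) > γ := by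
  rintro γ ⟨hsqrt, hγθ⟩
  have hγ : 1 < γ := ((Real.lt_sqrt zero_le_one).mpr (by simpa using hθ)).trans_le hsqrt
  have hθγ : θ ≤ γ ^ 2 := (Real.sqrt_le_left (by linarith)).mp hsqrt
  have hD := lt_oneWayTrading_denominator hγ hγθ hθγ
  exact ⟨div_lt_div_of_pos_left (by linarith) (by linarith) hD, hD⟩
end

section
/- Let 0 < L < U and let φ: [0,1] → [L, U] be integrable and nondecreasing. Consider the 1-instance with a single price v followed by a compulsory conversion price of at least L, and suppose the online threshold-based algorithm converts, at each step n with revealed price v_n and current utilization w, the amount x̄_n maximizing v_n·x - ∫_w^{w+x} φ(u) du over feasible x. Then for any instance with prices in [L, U] and final utilization w^(N-1) before the compulsory conversion, the algorithm's total return satisfies ALG ≥ ∫₀^{w^(N-1)} φ(u) du + (1 - w^(N-1))·L. -/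
theorem stmt_17 (L U : ℝ) (hL : 0 < L) (hLU : L < U)
    (φ : ℝ → ℝ) (hmono : MonotoneOn φ (Set.Icc 0 1))
    (hrange : ∀ w ∈ Set.Icc (0:ℝ) 1, φ w ∈ Set.Icc L U)
    (hint : IntervalIntegrable φ MeasureTheory.volume 0 1)
    (N : ℕ) (hN : 1 ≤ N) (v x : ℕ → ℝ)
    (hv : ∀ n < N, v n ∈ Set.Icc L U)
    (W : ℕ → ℝ) (hW : ∀ n, W n = ∑ i ∈ Finset.range n, x i)
    (hx : ∀ n < N - 1,
      x n ∈ Set.Icc 0 (1 - W n) ∧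
      ∀ y ∈ Set.Icc (0:ℝ) (1 - W n),
        v n * y - (∫ u in (W n)..(W n + y), φ u)
          ≤ v n * x n - ∫ u in (W n)..(W n + x n), φ u) :
    (∫ u in (0:ℝ)..(W (N - 1)), φ u) + (1 - W (N - 1)) * L
      ≤ (∑ n ∈ Finset.range (N - 1), v n * x n) + (1 - W (N - 1)) * v (N - 1) := by
  set M := N - 1 with hM
  have hW0 : W 0 = 0 := by simp [hW]
  have hWsucc : ∀ n, W (n + 1) = W n + x n := by
    intro n; simp [hW, Finset.sum_range_succ]
  -- bounds: for n ≤ M, 0 ≤ W n ≤ 1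
  have hbound : ∀ n ≤ M, 0 ≤ W n ∧ W n ≤ 1 := by
    intro n hn
    induction n with
    | zero => simp [hW0]
    | succ k ih =>
      have hk : k < M := Nat.lt_of_succ_le hn
      have ihk := ih (le_of_lt hk)
      obtain ⟨⟨hx0, hx1⟩, _⟩ := hx k hk
      constructor
      · rw [hWsucc]; linarith [ihk.1]
      · rw [hWsucc]; linarith
  -- integrability on each adjacent interval
  have hintsub : ∀ n < M, IntervalIntegrable φ MeasureTheory.volume (W n) (W (n+1)) := by
    intro n hn
    apply hint.mono_set
    rw [Set.uIcc_subset_uIcc_iff_mem]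
    have h1 := hbound n (le_of_lt hn)
    have h2 := hbound (n+1) hn
    constructor
    · rw [Set.uIcc_of_le (by norm_num)]; exact ⟨h1.1, h1.2⟩
    · rw [Set.uIcc_of_le (by norm_num)]; exact ⟨h2.1, h2.2⟩
  have hsplit : ∑ n ∈ Finset.range M, (∫ u in (W n)..(W (n+1)), φ u)
      = ∫ u in (W 0)..(W M), φ u :=
    intervalIntegral.sum_integral_adjacent_intervals hintsub
  -- each term bound
  have hterm : ∀ n < M, (∫ u in (W n)..(W (n+1)), φ u) ≤ v n * x n := by
    intro n hn
    obtain ⟨⟨hx0, hx1⟩, hmax⟩ := hx n hn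
    have h0 := hmax 0 ⟨le_refl _, by linarith⟩
    simp only [mul_zero, add_zero, intervalIntegral.integral_same, sub_zero, zero_sub,
      neg_nonpos] at h0
    rw [hWsucc]
    linarith [h0]
  have hsum : (∫ u in (0:ℝ)..(W M), φ u) ≤ ∑ n ∈ Finset.range M, v n * x n := by
    rw [← hW0, ← hsplit]
    exact Finset.sum_le_sum fun n hn => hterm n (Finset.mem_range.mp hn)
  -- last price bound
  have hvN : L ≤ v (N - 1) := (hv (N-1) (Nat.sub_lt (lt_of_lt_of_le Nat.zero_lt_one hN) Nat.zero_lt_one)).1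
  have hWM := hbound M (le_refl M)
  have hlast : (1 - W M) * L ≤ (1 - W M) * v (N - 1) := by
    apply mul_le_mul_of_nonneg_left hvN
    linarith [hWM.2]
  linarith [hsum, hlast]
end

section
/- Let 0 < L < U, θ = U/L, λ ∈ [0,1], let α ∈ (1, θ) satisfy (α-1)e^α = θ-1, and set γ(λ) = α + (1-λ)(θ - α) and η(λ) = θ/[θ/γ(λ) + (θ-1)(1 - (1/γ(λ))ln((θ-1)/(γ(λ)-1)))] (with η interpreted by continuity when γ = θ). Then γ: [0,1] → [α, θ] is strictly decreasing with γ(0) = θ, γ(1) = α, and η(0) = 1, η(1) = α, and 1 ≤ η(λ) ≤ γ(λ) for all λ ∈ [0,1]. -/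
/-!
Clearing denominators, `η = θγ / (θ + (θ - 1)(γ - ℓ))` with `ℓ = log ((θ - 1)/(γ - 1))`, so
`1 ≤ η ≤ γ` amounts to `θ - γ ≤ (θ - 1) ℓ` and `ℓ ≤ γ`. The first is `log x ≥ 1 - 1/x`; the second
holds because `γ ↦ (γ - 1) e^γ` is increasing and equals `θ - 1` at `γ = α`.
-/

open Real

lemma sub_le_mul_log_div {a b : ℝ} (ha : 0 < a) (hb : 0 < b) : a - b ≤ a * log (a / b) := by
  have h := one_sub_inv_le_log_of_pos (div_pos ha hb)
  rw [inv_div] at h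
  calc a - b = a * (1 - b / a) := by field_simp
    _ ≤ a * log (a / b) := mul_le_mul_of_nonneg_left h ha.le

lemma log_div_sub_one_le {α γ θ : ℝ} (hα : 1 < α) (hαγ : α ≤ γ)
    (hαθ : (α - 1) * exp α = θ - 1) : log ((θ - 1) / (γ - 1)) ≤ γ := by
  have hγ : 0 < γ - 1 := by linarith
  have hθ : 0 < θ - 1 := hαθ ▸ mul_pos (by linarith) (exp_pos α)
  rw [log_le_iff_le_exp (div_pos hθ hγ), div_le_iff₀ hγ, ← hαθ, mul_comm (exp γ)]
  exact mul_le_mul (by linarith) (exp_le_exp.2 hαγ) (exp_pos α).le hγ.le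

lemma div_div_add_mul_one_sub_eq {γ : ℝ} (hγ : γ ≠ 0) (θ ℓ : ℝ) :
    θ / (θ / γ + (θ - 1) * (1 - 1 / γ * ℓ)) = θ * γ / (θ + (θ - 1) * (γ - ℓ)) := by
  rw [← mul_div_mul_right θ _ hγ]
  congr 1
  field_simp

lemma mul_div_add_mul_sub_mem_Icc {θ γ ℓ : ℝ} (hθ : 1 < θ) (hγ : 0 < γ) (hℓγ : ℓ ≤ γ)
    (hθℓ : θ - γ ≤ (θ - 1) * ℓ) : θ * γ / (θ + (θ - 1) * (γ - ℓ)) ∈ Set.Icc 1 γ := by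
  have hθ' : θ ≤ θ + (θ - 1) * (γ - ℓ) :=
    le_add_of_nonneg_right (mul_nonneg (by linarith) (by linarith))
  have hpos : 0 < θ + (θ - 1) * (γ - ℓ) := by linarith
  constructor
  · rw [one_le_div hpos]; linarith
  · rw [div_le_iff₀ hpos]; nlinarith

theorem stmt_18_general (θ α : ℝ)
    (hα : α ∈ Set.Ioo 1 θ) (hαθ : (α - 1) * Real.exp α = θ - 1)
    (g h : ℝ → ℝ)
    (hg : ∀ lam, g lam = α + (1 - lam) * (θ - α))
    (hh : ∀ lam, h lam =
      θ / (θ / g lam + (θ - 1) * (1 - (1 / g lam) * Real.log ((θ - 1) / (g lam - 1))))) :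
    StrictAntiOn g (Set.Icc 0 1) ∧
    (∀ lam ∈ Set.Icc (0:ℝ) 1, g lam ∈ Set.Icc α θ) ∧
    g 0 = θ ∧ g 1 = α ∧ h 0 = 1 ∧ h 1 = α ∧
    (∀ lam ∈ Set.Icc (0:ℝ) 1, 1 ≤ h lam ∧ h lam ≤ g lam) := by
  obtain ⟨hα1, hαθ'⟩ := hα
  have hθ1 : 1 < θ := hα1.trans hαθ'
  have hθ0 : 0 < θ := by linarith
  have hg0 : g 0 = θ := by rw [hg]; ring
  have hg1 : g 1 = α := by rw [hg]; ring
  have hgIcc : ∀ lam ∈ Set.Icc (0:ℝ) 1, g lam ∈ Set.Icc α θ := fun lam ⟨h0, h1⟩ => by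
    rw [hg]; constructor <;> nlinarith
  have hh' : ∀ lam ∈ Set.Icc (0:ℝ) 1,
      h lam = θ * g lam / (θ + (θ - 1) * (g lam - log ((θ - 1) / (g lam - 1)))) :=
    fun lam hlam => (hh lam).trans
      (div_div_add_mul_one_sub_eq (by linarith [(hgIcc lam hlam).1]) _ _)
  refine ⟨fun a _ b _ hab => ?_, hgIcc, hg0, hg1, ?_, ?_, fun lam hlam => ?_⟩
  · rw [hg, hg]; nlinarith
  · rw [hh' 0 (by simp), hg0, div_self (sub_ne_zero.2 hθ1.ne'), log_one, sub_zero,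
      show θ + (θ - 1) * θ = θ * θ by ring]
    exact div_self (by positivity)
  · have he : (θ - 1) / (α - 1) = exp α := by
      rw [div_eq_iff (sub_ne_zero.2 hα1.ne')]; linarith
    rw [hh' 1 (by simp), hg1, he, log_exp, sub_self, mul_zero, add_zero,
      mul_div_cancel_left₀ _ (by positivity)]
  · obtain ⟨hαg, hgθ⟩ := hgIcc lam hlam
    rw [hh' lam hlam]
    refine mul_div_add_mul_sub_mem_Icc hθ1 (by linarith) (log_div_sub_one_le hα1 hαg hαθ) ?_
    simpa only [sub_sub_sub_cancel_right] using
      sub_le_mul_log_div (a := θ - 1) (b := g lam - 1) (by linarith) (by linarith)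

theorem stmt_18 (L U θ α : ℝ) (hL : 0 < L) (hLU : L < U) (hθ : θ = U / L)
    (hα : α ∈ Set.Ioo 1 θ) (hαθ : (α - 1) * Real.exp α = θ - 1)
    (g h : ℝ → ℝ)
    (hg : ∀ lam, g lam = α + (1 - lam) * (θ - α))
    (hh : ∀ lam, h lam =
      θ / (θ / g lam + (θ - 1) * (1 - (1 / g lam) * Real.log ((θ - 1) / (g lam - 1))))) :
    StrictAntiOn g (Set.Icc 0 1) ∧
    (∀ lam ∈ Set.Icc (0:ℝ) 1, g lam ∈ Set.Icc α θ) ∧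
    g 0 = θ ∧ g 1 = α ∧ h 0 = 1 ∧ h 1 = α ∧
    (∀ lam ∈ Set.Icc (0:ℝ) 1, 1 ≤ h lam ∧ h lam ≤ g lam) :=
  stmt_18_general θ α hα hαθ g h hg hh
end
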